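/- arXiv:0803.2098 — 5 statements merged into one kernel-verified Lean document; each statement's English description precedes it below -/
import Mathlib

section
/- Let X be a locally path-connected metric space and Y ⊆ X a subset. Then the set L = Fin(X) \ Fin(Y), consisting of all nonempty finite subsets of X not contained in Y, is relatively LC⁰ in the hyperspace Comp(X) of nonempty compact subsets of X with the Hausdorff metric. -/
/-!
Fix `z` and `ε` with `ball z ε ⊆ U`. Compactness of `z` and local path-connectedness give a
Lebesgue number `δ`: two points `δ`-close to a common point of `z` are joined by a path staying
`ε / 2`-close to `z`. If `A` and `B` are finite and `δ`-close to `z`, each `b ∈ B` is therefore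
joined to a point of `A`. Keeping `A` fixed and letting every `b` run along its path gives a path
of finite sets from `A` to `A ∪ B`; each of them contains `A`, so is not contained in `Y`, and
stays `ε / 2`-close to `z`. Symmetrically `A ∪ B` is joined to `B`.
-/

open Set Topology TopologicalSpace Filter

/-- `Y` is relatively `LC⁰` in `Z` if for every `z ∈ Z` each neighborhood `U` of
`z` contains a smaller neighborhood `V` of `z` such that every two points of
`V ∩ Y` can be joined by a path in `U ∩ Y`. -/
def RelativelyLC0 {Z : Type*} [TopologicalSpace Z] (Y : Set Z) : Prop :=
  ∀ z : Z, ∀ U ∈ 𝓝 z, ∃ V ∈ 𝓝 z, V ⊆ U ∧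
    ∀ a ∈ V ∩ Y, ∀ b ∈ V ∩ Y, JoinedIn (U ∩ Y) a b

open Metric

section

variable {X : Type*} [MetricSpace X]

theorem IsCompact.exists_pos_forall_joinedIn_thickening [LocallyPathConnectedSpace X]
    {K : Set X} (hK : IsCompact K) {ε : ℝ} (hε : 0 < ε) :
    ∃ δ > 0, ∀ k ∈ K, ∀ a ∈ ball k δ, ∀ b ∈ ball k δ, JoinedIn (thickening ε K) a b := by
  have hW (x : X) : ∃ W ∈ 𝓝 x, IsPathConnected W ∧ W ⊆ ball x ε :=
    (path_connected_basis x).mem_iff.1 (ball_mem_nhds x hε) |>.imp fun _ ⟨⟨hW, hpc⟩, hsub⟩ =>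
      ⟨hW, hpc, hsub⟩
  choose W hWx hWpc hWball using hW
  obtain ⟨δ, hδ, hleb⟩ := lebesgue_number_lemma_of_metric (c := fun x : K => interior (W x)) hK
    (fun _ => isOpen_interior)
    (fun k hk => mem_iUnion.2 ⟨⟨k, hk⟩, mem_interior_iff_mem_nhds.2 (hWx k)⟩)
  refine ⟨δ, hδ, fun k hk a ha b hb => ?_⟩
  obtain ⟨x, hkx⟩ := hleb k hk
  have hxK : ball (x : X) ε ⊆ thickening ε K := ball_subset_thickening x.2 ε
  exact ((hWpc x).joinedIn a (interior_subset (hkx ha)) b (interior_subset (hkx hb))).mono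
    ((hWball x).trans hxK)

namespace TopologicalSpace.NonemptyCompacts

def unionRange {ι : Type*} [Finite ι] (A : NonemptyCompacts X) (f : ι → X) :
    NonemptyCompacts X where
  carrier := (A : Set X) ∪ range f
  isCompact' := A.isCompact.union (finite_range f).isCompact
  nonempty' := A.nonempty.mono subset_union_left

@[simp]
theorem coe_unionRange {ι : Type*} [Finite ι] (A : NonemptyCompacts X) (f : ι → X) :
    (A.unionRange f : Set X) = (A : Set X) ∪ range f :=
  rfl

theorem lipschitzWith_unionRange {ι : Type*} [Fintype ι] (A : NonemptyCompacts X) :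
    LipschitzWith 1 (A.unionRange : (ι → X) → NonemptyCompacts X) := by
  refine LipschitzWith.of_dist_le_mul fun f g => ?_
  rw [NNReal.coe_one, one_mul, NonemptyCompacts.dist_eq]
  refine hausdorffDist_le_of_mem_dist dist_nonneg ?_ ?_
  · rintro x (hx | ⟨i, rfl⟩)
    · exact ⟨x, Or.inl hx, by simp⟩
    · exact ⟨g i, Or.inr (mem_range_self i), dist_le_pi_dist f g i⟩
  · rintro x (hx | ⟨i, rfl⟩)
    · exact ⟨x, Or.inl hx, by simp⟩
    · exact ⟨f i, Or.inr (mem_range_self i), dist_comm (g i) (f i) ▸ dist_le_pi_dist f g i⟩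

theorem exists_mem_dist_lt_and_dist_lt {A B z : NonemptyCompacts X} {r : ℝ}
    (hAz : dist A z < r) (hBz : dist B z < r) {b : X} (hb : b ∈ B) :
    ∃ k ∈ z, ∃ a ∈ A, dist a k < r ∧ dist b k < r := by
  rw [NonemptyCompacts.dist_eq] at hAz hBz
  obtain ⟨k, hk, hbk⟩ := exists_dist_lt_of_hausdorffDist_lt hb hBz (edist_ne_top B z)
  obtain ⟨a, ha, hak⟩ := exists_dist_lt_of_hausdorffDist_lt' hk hAz (edist_ne_top A z)
  exact ⟨k, hk, a, ha, hak, hbk⟩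

theorem dist_le_of_subset_union_thickening {A K z : NonemptyCompacts X} {r : ℝ}
    (hAz : dist A z < r) (hAK : (A : Set X) ⊆ K) (hK : (K : Set X) ⊆ A ∪ thickening r z) :
    dist K z ≤ r := by
  rw [NonemptyCompacts.dist_eq] at hAz ⊢
  refine hausdorffDist_le_of_mem_dist (hausdorffDist_nonneg.trans hAz.le) (fun x hx => ?_)
    fun y hy => ?_
  · rcases hK hx with hxA | hxz
    · obtain ⟨y, hy, hxy⟩ := exists_dist_lt_of_hausdorffDist_lt hxA hAz (edist_ne_top A z)
      exact ⟨y, hy, hxy.le⟩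
    · obtain ⟨y, hy, hxy⟩ := mem_thickening_iff.1 hxz
      exact ⟨y, hy, hxy.le⟩
  · obtain ⟨x, hx, hxy⟩ := exists_dist_lt_of_hausdorffDist_lt' hy hAz (edist_ne_top A z)
    exact ⟨x, hAK hx, (dist_comm y x ▸ hxy).le⟩

theorem joinedIn_sup {S : Set X} {A B : NonemptyCompacts X} (hB : (B : Set X).Finite)
    (h : ∀ b ∈ B, ∃ a ∈ A, JoinedIn S a b) :
    JoinedIn {K : NonemptyCompacts X | ∃ F ⊆ S, F.Finite ∧ (K : Set X) = (A : Set X) ∪ F}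
      A (A ⊔ B) := by
  have := hB.fintype
  choose a ha γ hγ using h
  let Φ (t : unitInterval) : NonemptyCompacts X := A.unionRange fun b : B => γ b b.2 t
  have hΦ : Continuous Φ :=
    A.lipschitzWith_unionRange.continuous.comp (continuous_pi fun b => (γ b b.2).continuous)
  refine ⟨⟨⟨Φ, hΦ⟩, ?_, ?_⟩, fun t => ⟨_, ?_, finite_range _, rfl⟩⟩
  · ext1
    simpa [Φ, range_subset_iff] using fun b hb => ha b hb
  · ext1
    simp [Φ]
  · rintro _ ⟨b, rfl⟩
    exact hγ b b.2 t

end TopologicalSpace.NonemptyCompacts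

end

/-- for a locally path-connected metric space `X` and `Y ⊆ X`,
the set `Fin(X) \ Fin(Y)` of nonempty finite subsets of `X` not contained in `Y`
is relatively `LC⁰` in the hyperspace `Comp(X)` of nonempty compact subsets of
`X` with the Hausdorff metric. -/
theorem fin_diff_fin_relativelyLC0
    {X : Type*} [MetricSpace X] [LocallyPathConnectedSpace X] (Y : Set X) :
    RelativelyLC0 {K : NonemptyCompacts X | (K : Set X).Finite ∧ ¬ (K : Set X) ⊆ Y} := by
  set L := {K : NonemptyCompacts X | (K : Set X).Finite ∧ ¬ (K : Set X) ⊆ Y}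
  intro z U hU
  obtain ⟨ε, hε, hzU⟩ := Metric.mem_nhds_iff.1 hU
  obtain ⟨δ, hδ, hjoin⟩ := z.isCompact.exists_pos_forall_joinedIn_thickening (half_pos hε)
  set r := min δ (ε / 2)
  have hr : 0 < r := lt_min hδ (half_pos hε)
  have hrε : r ≤ ε / 2 := min_le_right _ _
  refine ⟨ball z r, ball_mem_nhds z hr, (ball_subset_ball (by linarith)).trans hzU, ?_⟩
  have key : ∀ A ∈ ball z r ∩ L, ∀ B ∈ ball z r ∩ L, JoinedIn (U ∩ L) A (A ⊔ B) := by
    rintro A ⟨hAz, hAfin, hAY⟩ B ⟨hBz, hBfin, -⟩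
    refine (NonemptyCompacts.joinedIn_sup (S := thickening (ε / 2) z) hBfin
      fun b hb => ?_).mono ?_
    · obtain ⟨k, hk, a, ha, hak, hbk⟩ := NonemptyCompacts.exists_mem_dist_lt_and_dist_lt
        (hAz.trans_le (min_le_left _ _)) (hBz.trans_le (min_le_left _ _)) hb
      exact ⟨a, ha, hjoin k hk a hak b hbk⟩
    · rintro K ⟨F, hFS, hFfin, hK⟩
      refine ⟨hzU (mem_ball.2 ?_), hK ▸ hAfin.union hFfin, fun hKY => hAY ?_⟩
      · have hKz := NonemptyCompacts.dist_le_of_subset_union_thickening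
          (hAz.trans_le hrε) (hK ▸ subset_union_left) (hK ▸ union_subset_union_right _ hFS)
        linarith
      · exact hK ▸ subset_union_left |>.trans hKY
  intro A hA B hB
  exact (key A hA B hB).trans (sup_comm A B ▸ key B hB A hA).symm
end

section
/- If X is a locally connected, locally compact, separable metrizable space with no compact connected components, then its Alexandroff one-point compactification αX is a Peano continuum, i.e., αX is compact, connected, locally connected and metrizable. -/
/-!
Neighbourhoods of `∞` are generated by the complements of a compact exhaustion of `X`, so `αX` is
a second countable compact Hausdorff space, hence metrizable. For `W ⊆ X` open with compact
complement, let `T` be the union of the components of `W` with noncompact closure. Each of them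
accumulates at `∞`, so `T ∪ {∞}` is connected; and `T` has compact complement: a component of `W`
with compact closure must reach `Wᶜ` (otherwise it would be a compact clopen set containing a
component of `X`), so unless it lies in a compact neighbourhood `M` of `Wᶜ` it meets the compact
frontier of `M`, which finitely many components of `W` cover. Taking `W = X` gives connectedness,
and shrinking `W` gives local connectedness at `∞`.
-/

open Set Topology TopologicalSpace OnePoint

lemma IsPreconnected.inter_frontier_nonempty {α : Type*} [TopologicalSpace α] {C M : Set α}
    (hC : IsPreconnected C) (hCM : (C ∩ M).Nonempty) (hCM' : (C \ M).Nonempty) :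
    (C ∩ frontier M).Nonempty := by
  by_contra! h
  have hsub : C ⊆ interior M ∪ interior Mᶜ := by
    rw [← compl_frontier_eq_union_interior, subset_compl_iff_disjoint_right]
    exact disjoint_iff_inter_eq_empty.2 h
  obtain ⟨p, hpC, hpM⟩ := hCM
  obtain ⟨q, hqC, hqM⟩ := hCM'
  obtain ⟨z, -, hzM, hzM'⟩ := hC _ _ isOpen_interior isOpen_interior hsub
    ⟨p, hpC, (hsub hpC).resolve_right fun h => interior_subset h hpM⟩
    ⟨q, hqC, (hsub hqC).resolve_left fun h => hqM (interior_subset h)⟩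
  exact interior_subset hzM' (interior_subset hzM)

section

variable {X : Type*} [TopologicalSpace X]

def noncompactComponentsIn (W : Set X) : Set X :=
  {y ∈ W | ¬IsCompact (closure (connectedComponentIn W y))}

lemma connectedComponentIn_subset_noncompactComponentsIn {W : Set X} {y : X}
    (hy : y ∈ noncompactComponentsIn W) :
    connectedComponentIn W y ⊆ noncompactComponentsIn W := fun _ hz =>
  ⟨connectedComponentIn_subset _ _ hz, connectedComponentIn_eq hz ▸ hy.2⟩

lemma noncompactComponentsIn_univ (hcomp : ∀ x : X, ¬IsCompact (connectedComponent x)) :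
    noncompactComponentsIn (univ : Set X) = univ :=
  eq_univ_of_forall fun y =>
    ⟨mem_univ y, by
      rw [connectedComponentIn_univ, isClosed_connectedComponent.closure_eq]
      exact hcomp y⟩

lemma IsOpen.noncompactComponentsIn [LocallyConnectedSpace X] {W : Set X} (hW : IsOpen W) :
    IsOpen (noncompactComponentsIn W) :=
  isOpen_iff_forall_mem_open.2 fun _ hy =>
    ⟨_, connectedComponentIn_subset_noncompactComponentsIn hy, hW.connectedComponentIn,
      mem_connectedComponentIn hy.1⟩

lemma closure_connectedComponentIn_diff_nonempty [LocallyConnectedSpace X] {W : Set X} {y : X}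
    (hW : IsOpen W) (hy : y ∈ W) (hy' : ¬IsCompact (connectedComponent y))
    (hC : IsCompact (closure (connectedComponentIn W y))) :
    (closure (connectedComponentIn W y) \ W).Nonempty := by
  rw [sdiff_nonempty]
  intro hsub
  have hclosed : closure (connectedComponentIn W y) = connectedComponentIn W y :=
    (isPreconnected_connectedComponentIn.closure.subset_connectedComponentIn
      (subset_closure (mem_connectedComponentIn hy)) hsub).antisymm subset_closure
  have hclopen : IsClopen (connectedComponentIn W y) :=
    ⟨hclosed ▸ isClosed_closure, hW.connectedComponentIn⟩
  exact hy' (hC.of_isClosed_subset isClosed_connectedComponent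
    ((hclopen.connectedComponent_subset (mem_connectedComponentIn hy)).trans subset_closure))

lemma connectedComponentIn_inter_frontier_nonempty [LocallyConnectedSpace X] {W M : Set X}
    {y : X} (hW : IsOpen W) (hWM : Wᶜ ⊆ interior M) (hy : y ∈ W) (hyM : y ∉ M)
    (hy' : ¬IsCompact (connectedComponent y))
    (hC : IsCompact (closure (connectedComponentIn W y))) :
    (connectedComponentIn W y ∩ frontier M).Nonempty := by
  obtain ⟨p, hpC, hpW⟩ := closure_connectedComponentIn_diff_nonempty hW hy hy' hC
  have hCM : (connectedComponentIn W y ∩ interior M).Nonempty :=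
    (closure_inter_open_nonempty_iff isOpen_interior).1 ⟨p, hpC, hWM hpW⟩
  exact isPreconnected_connectedComponentIn.inter_frontier_nonempty
    (hCM.mono (inter_subset_inter_right _ interior_subset))
    ⟨y, mem_connectedComponentIn hy, hyM⟩

lemma isCompact_compl_noncompactComponentsIn [LocallyConnectedSpace X] [LocallyCompactSpace X]
    [T2Space X] (hcomp : ∀ x : X, ¬IsCompact (connectedComponent x)) {W : Set X}
    (hW : IsOpen W) (hWc : IsCompact Wᶜ) : IsCompact (noncompactComponentsIn W)ᶜ := by
  obtain ⟨M, hM, hWM⟩ := exists_compact_superset hWc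
  have hfrontierW : frontier M ⊆ W := fun z hz => by_contra fun hzW => hz.2 (hWM hzW)
  have hfrontier : IsCompact (frontier M) :=
    hM.of_isClosed_subset isClosed_frontier
      (frontier_subset_closure.trans hM.isClosed.closure_subset)
  obtain ⟨t, -, ht, hcover⟩ := hfrontier.elim_finite_subcover_image
    (fun z _ => hW.connectedComponentIn) fun z hz =>
      mem_biUnion hz (mem_connectedComponentIn (hfrontierW hz))
  let t' := {z ∈ t | IsCompact (closure (connectedComponentIn W z))}
  have hcompact : IsCompact (M ∪ ⋃ z ∈ t', closure (connectedComponentIn W z)) :=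
    hM.union ((ht.subset (sep_subset _ _)).isCompact_biUnion fun z hz => hz.2)
  refine hcompact.of_isClosed_subset hW.noncompactComponentsIn.isClosed_compl fun y hy => ?_
  by_cases hyM : y ∈ M
  · exact Or.inl hyM
  have hyW : y ∈ W := by_contra fun h => hyM (interior_subset (hWM h))
  have hyC : IsCompact (closure (connectedComponentIn W y)) := by_contra fun h => hy ⟨hyW, h⟩
  obtain ⟨q, hqC, hqM⟩ :=
    connectedComponentIn_inter_frontier_nonempty hW hWM hyW hyM (hcomp y) hyC
  obtain ⟨z, hzt, hqz⟩ := mem_iUnion₂.1 (hcover hqM)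
  have hzy : connectedComponentIn W z = connectedComponentIn W y := by
    rw [connectedComponentIn_eq hqz, connectedComponentIn_eq hqC]
  exact Or.inr (mem_biUnion (show z ∈ t' from ⟨hzt, hzy ▸ hyC⟩)
    (hzy ▸ subset_closure (mem_connectedComponentIn hyW)))

namespace OnePoint

lemma infty_mem_closure_image_coe {D : Set X} (hD : ¬IsCompact (closure D)) :
    (∞ : OnePoint X) ∈ closure (((↑) : X → OnePoint X) '' D) := by
  rw [mem_closure_iff_nhds_basis hasBasis_nhds_infty]
  rintro s ⟨hs, hs'⟩
  obtain ⟨x, hxD, hxs⟩ := not_subset.1 fun hDs => hD (hs'.of_isClosed_subset isClosed_closure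
    (closure_minimal hDs hs))
  exact ⟨x, mem_image_of_mem _ hxD, Or.inl (mem_image_of_mem _ hxs)⟩

lemma isPreconnected_insert_infty_image_coe {D : Set X} (hD : IsPreconnected D)
    (hD' : ¬IsCompact (closure D)) :
    IsPreconnected (insert ∞ (((↑) : X → OnePoint X) '' D)) :=
  (hD.image _ continuous_coe.continuousOn).subset_closure (subset_insert _ _)
    (insert_subset (infty_mem_closure_image_coe hD') subset_closure)

lemma isPreconnected_image_noncompactComponentsIn_union_infty (W : Set X) :
    IsPreconnected (((↑) : X → OnePoint X) '' noncompactComponentsIn W ∪ {∞}) := by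
  refine isPreconnected_of_forall ∞ ?_
  rintro _ (⟨y, hy, rfl⟩ | rfl)
  · refine ⟨insert ∞ ((↑) '' connectedComponentIn W y), ?_, mem_insert _ _,
      mem_insert_of_mem _ (mem_image_of_mem _ (mem_connectedComponentIn hy.1)),
      isPreconnected_insert_infty_image_coe isPreconnected_connectedComponentIn hy.2⟩
    rw [union_singleton]
    exact insert_subset_insert
      (image_mono (connectedComponentIn_subset_noncompactComponentsIn hy))
  · exact ⟨{∞}, subset_union_right, rfl, rfl, isPreconnected_singleton⟩

instance [T2Space X] [LocallyCompactSpace X] [SecondCountableTopology X] :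
    SecondCountableTopology (OnePoint X) := by
  let K := CompactExhaustion.choice X
  refine IsTopologicalBasis.secondCountableTopology
    (b := ((((↑) : X → OnePoint X) '' ·) '' countableBasis X) ∪
      range fun n => ((↑) '' K n)ᶜ)
    (isTopologicalBasis_of_isOpen_of_nhds ?_ ?_)
    (((countable_countableBasis X).image _).union (countable_range _))
  · rintro _ (⟨s, hs, rfl⟩ | ⟨n, rfl⟩)
    · exact isOpen_image_coe.2 (isOpen_of_mem_countableBasis hs)
    · exact isOpen_compl_image_coe.2 ⟨K.isClosed n, K.isCompact n⟩
  · intro x u hxu hu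
    induction x with
    | infty =>
      obtain ⟨s, ⟨-, hs⟩, hsu⟩ := hasBasis_nhds_infty.mem_iff.1 (hu.mem_nhds hxu)
      obtain ⟨n, hn⟩ := K.exists_superset_of_isCompact hs
      refine ⟨((↑) '' K n)ᶜ, Or.inr ⟨n, rfl⟩, fun h => infty_notMem_image_coe h, ?_⟩
      rw [compl_image_coe]
      exact (union_subset_union_left _ (image_mono (compl_subset_compl.2 hn))).trans hsu
    | coe x =>
      obtain ⟨s, hs, hxs, hsu⟩ := (isBasis_countableBasis X).exists_subset_of_mem_open hxu
        (hu.preimage continuous_coe)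
      exact ⟨_, Or.inl ⟨s, hs, rfl⟩, mem_image_of_mem _ hxs,
        (image_mono hsu).trans (image_preimage_subset _ _)⟩

lemma connectedSpace (hcomp : ∀ x : X, ¬IsCompact (connectedComponent x)) :
    ConnectedSpace (OnePoint X) where
  isPreconnected_univ := by
    simpa [noncompactComponentsIn_univ hcomp, range_coe_union_infty] using
      isPreconnected_image_noncompactComponentsIn_union_infty (univ : Set X)
  toNonempty := ⟨∞⟩

lemma locallyConnectedSpace [LocallyConnectedSpace X] [LocallyCompactSpace X] [T2Space X]
    (hcomp : ∀ x : X, ¬IsCompact (connectedComponent x)) :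
    LocallyConnectedSpace (OnePoint X) := by
  rw [locallyConnectedSpace_iff_connected_subsets]
  intro x U hU
  induction x with
  | infty =>
    obtain ⟨L, ⟨hL, hL'⟩, hLU⟩ := hasBasis_nhds_infty.mem_iff.1 hU
    have hT :=
      isCompact_compl_noncompactComponentsIn hcomp hL.isOpen_compl (by rwa [compl_compl])
    refine ⟨_, ?_, isPreconnected_image_noncompactComponentsIn_union_infty Lᶜ, ?_⟩
    · simpa using hasBasis_nhds_infty.mem_of_mem
        ⟨hL.isOpen_compl.noncompactComponentsIn.isClosed_compl, hT⟩
    · exact (union_subset_union_left _ (image_mono fun y hy => hy.1)).trans hLU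
  | coe x =>
    rw [nhds_coe_eq] at hU
    obtain ⟨V, hV, hV', hVU⟩ := locallyConnectedSpace_iff_connected_subsets.1 ‹_› x _ hU
    exact ⟨_, nhds_coe_eq x ▸ Filter.image_mem_map hV, hV'.image _ continuous_coe.continuousOn,
      (image_mono hVU).trans (image_preimage_subset _ _)⟩

end OnePoint

end

/-- if `X` is a locally connected, locally compact, separable
metrizable space with no compact connected components, then its Alexandroff
one-point compactification `αX` is a Peano continuum, i.e. compact, connected,
locally connected and metrizable. -/
theorem onePoint_peano_continuum
    {X : Type*} [TopologicalSpace X] [LocallyConnectedSpace X]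
    [LocallyCompactSpace X] [SeparableSpace X] [MetrizableSpace X]
    (hcomp : ∀ x : X, ¬ IsCompact (connectedComponent x)) :
    CompactSpace (OnePoint X) ∧ ConnectedSpace (OnePoint X) ∧
      LocallyConnectedSpace (OnePoint X) ∧ MetrizableSpace (OnePoint X) := by
  have : SecondCountableTopology X := by
    let : MetricSpace X := metrizableSpaceMetric X
    exact UniformSpace.secondCountable_of_separable X
  exact ⟨inferInstance, connectedSpace hcomp, locallyConnectedSpace hcomp, inferInstance⟩
end

section
/- Let (X,d) be a metric space whose completion X̄ is proper, locally connected and has no bounded connected component, and let (αX, ρ) be the one-point extension of X. Then the completion of (αX, ρ) is a Peano continuum, i.e., it is compact, connected and locally connected. -/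
/-!
Give the completion `Y` of `X` the one-point metric `ρ` as well. Then `Option Y` contains
`Option X` isometrically and densely, and it is compact, hence it is the completion of `(αX, ρ)`.
The neighbourhoods of `∞` are exactly the sets whose trace on `Y` is cobounded. Hence `Option Y`
is compact because `Y` is proper, and connected because every component of `Y` is unbounded and
so has `∞` in its closure. At `∞`, properness and local connectedness of `Y` show that far
enough out every point lies in an unbounded component of the complement of a given ball; these
components together with `∞` form a connected neighbourhood of `∞`.
-/

open Metric Set Topology Filter Bornology

/-- The metric `ρ` of the one-point extension `αX = X ∪ {∞}`, where `∞ = none`. -/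
noncomputable def rho {X : Type*} [MetricSpace X] (x₀ : X) :
    Option X → Option X → ℝ
  | some x, some y => min (dist x y) (1 / (1 + dist x x₀) + 1 / (1 + dist y x₀))
  | some x, none => 1 / (1 + dist x x₀)
  | none, some y => 1 / (1 + dist y x₀)
  | none, none => 0

section RhoMetric

variable {Y : Type*} [MetricSpace Y]

lemma one_div_one_add_dist_le (y₀ x y : Y) :
    1 / (1 + dist x y₀) ≤ 1 / (1 + dist y y₀) + dist x y := by
  have := dist_triangle y x y₀
  rw [dist_comm y x] at this
  rw [div_add' _ _ _ (by positivity), div_le_div_iff₀ (by positivity) (by positivity)]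
  have ha := dist_nonneg (x := x) (y := y₀)
  have hb := dist_nonneg (x := y) (y := y₀)
  have hc := dist_nonneg (x := x) (y := y)
  nlinarith [mul_nonneg (mul_nonneg hc ha) hb, mul_nonneg hc ha, mul_nonneg hc hb]

lemma one_div_one_add_dist_le_add_rho (y₀ x y : Y) :
    1 / (1 + dist x y₀) ≤ 1 / (1 + dist y y₀) + rho y₀ (some x) (some y) := by
  have : 0 < 1 / (1 + dist y y₀) := by positivity
  rw [← sub_le_iff_le_add']
  exact le_min (by linarith [one_div_one_add_dist_le y₀ x y]) (by linarith)

lemma rho_self (y₀ : Y) (p : Option Y) : rho y₀ p p = 0 := by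
  rcases p with _ | x
  · rfl
  · simp only [rho, dist_self]
    exact min_eq_left (by positivity)

lemma rho_comm (y₀ : Y) (p q : Option Y) : rho y₀ p q = rho y₀ q p := by
  rcases p with _ | x <;> rcases q with _ | y <;> simp only [rho]
  rw [dist_comm, add_comm]

lemma rho_triangle (y₀ : Y) (p q r : Option Y) :
    rho y₀ p r ≤ rho y₀ p q + rho y₀ q r := by
  have hpos (x : Y) : 0 < 1 / (1 + dist x y₀) := by positivity
  have hlip := one_div_one_add_dist_le_add_rho y₀
  match p, q, r with
  | none, none, _ => simp [rho]
  | none, some y, none => exact add_nonneg (hpos y).le (hpos y).le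
  | none, some y, some z => rw [rho_comm y₀ (some y)]; exact hlip z y
  | some x, none, none => simp [rho]
  | some x, none, some z => exact min_le_right _ _
  | some x, some y, none => rw [add_comm]; exact hlip x y
  | some x, some y, some z =>
    simp only [rho]
    rcases min_choice (dist x y) (1 / (1 + dist x y₀) + 1 / (1 + dist y y₀))
        with h₁ | h₁ <;>
      rcases min_choice (dist y z) (1 / (1 + dist y y₀) + 1 / (1 + dist z y₀))
        with h₂ | h₂ <;>
      rw [h₁, h₂]
    · exact (min_le_left _ _).trans (dist_triangle x y z)
    all_goals
      refine (min_le_right _ _).trans ?_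
      linarith [one_div_one_add_dist_le y₀ x y, one_div_one_add_dist_le y₀ z y, dist_comm z y,
        hpos y]

lemma eq_of_rho_eq_zero (y₀ : Y) {p q : Option Y} (h : rho y₀ p q = 0) : p = q := by
  have hpos (x : Y) : 0 < 1 / (1 + dist x y₀) := by positivity
  rcases p with _ | x <;> rcases q with _ | y
  · rfl
  · exact absurd h (hpos y).ne'
  · exact absurd h (hpos x).ne'
  · simp only [rho] at h
    rcases min_choice (dist x y) (1 / (1 + dist x y₀) + 1 / (1 + dist y y₀)) with h' | h' <;>
      rw [h'] at h
    · exact congrArg some (dist_eq_zero.1 h)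
    · linarith [hpos x, hpos y]

noncomputable abbrev rhoMetricSpace (y₀ : Y) : MetricSpace (Option Y) where
  dist := rho y₀
  dist_self := rho_self y₀
  dist_comm := rho_comm y₀
  dist_triangle := rho_triangle y₀
  eq_of_dist_eq_zero := eq_of_rho_eq_zero y₀
  edist_dist _ _ := rfl

end RhoMetric

lemma mem_connectedComponentIn_of_mem_closure {α : Type*} [TopologicalSpace α]
    [LocallyConnectedSpace α] {S : Set α} (hS : IsOpen S) {x y : α}
    (hy : y ∈ closure (connectedComponentIn S x)) (hyS : y ∈ S) :
    y ∈ connectedComponentIn S x := by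
  obtain ⟨p, hpy, hpx⟩ := _root_.mem_closure_iff.1 hy _ hS.connectedComponentIn
    (mem_connectedComponentIn hyS)
  rw [connectedComponentIn_eq hpx, ← connectedComponentIn_eq hpy]
  exact mem_connectedComponentIn hyS

section ComponentsOutsideBalls

variable {Y : Type*} [MetricSpace Y] [LocallyConnectedSpace Y]

lemma exists_dist_eq_of_isBounded_connectedComponentIn {y₀ y : Y} {R r : ℝ} (hRr : R < r)
    (hy : r ≤ dist y y₀) (hbdd : IsBounded (connectedComponentIn (closedBall y₀ R)ᶜ y))
    (hunb : ¬ IsBounded (connectedComponent y)) :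
    ∃ z ∈ connectedComponentIn (closedBall y₀ R)ᶜ y, dist z y₀ = r := by
  set C := connectedComponentIn (closedBall y₀ R)ᶜ y
  have hS : IsOpen (closedBall y₀ R)ᶜ := isClosed_closedBall.isOpen_compl
  have hyS : y ∈ (closedBall y₀ R)ᶜ := by
    rw [mem_compl_iff, mem_closedBall, not_le]; linarith
  have hyC : y ∈ C := mem_connectedComponentIn hyS
  obtain ⟨w, hwC, hwR⟩ : ∃ w ∈ closure C, dist w y₀ ≤ R := by
    by_contra! h
    have hC : IsClosed C := isClosed_of_closure_subset fun w hw =>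
      mem_connectedComponentIn_of_mem_closure hS hw (by simpa using h w hw)
    exact hunb (hbdd.subset
      (IsClopen.connectedComponent_subset ⟨hC, hS.connectedComponentIn⟩ hyC))
  obtain ⟨z, hzC, hzr : dist z y₀ = r⟩ :=
    isPreconnected_connectedComponentIn.closure.intermediate_value hwC (subset_closure hyC)
      (continuous_id.dist continuous_const).continuousOn
      (⟨by linarith, hy⟩ : r ∈ Icc (dist w y₀) (dist y y₀))
  refine ⟨z, mem_connectedComponentIn_of_mem_closure hS hzC ?_, hzr⟩
  rw [mem_compl_iff, mem_closedBall, not_le]; linarith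

/-- The components of `(closedBall y₀ R)ᶜ` are open, so finitely many of them cover the compact
sphere of radius `R + 1`, and the bounded ones among them lie in a bounded set `B`. A bounded
component reaching beyond that sphere crosses it, so it is one of them. -/
lemma eventually_cobounded_not_isBounded_connectedComponentIn [ProperSpace Y]
    (hcomp : ∀ y : Y, ¬ IsBounded (connectedComponent y)) (y₀ : Y) (R : ℝ) :
    ∀ᶠ y in cobounded Y, ¬ IsBounded (connectedComponentIn (closedBall y₀ R)ᶜ y) := by
  classical
  set S := (closedBall y₀ R)ᶜ
  have hS : IsOpen S := isClosed_closedBall.isOpen_compl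
  have hsphere : sphere y₀ (R + 1) ⊆ S := fun z hz => by
    rw [mem_compl_iff, mem_closedBall, not_le, mem_sphere.1 hz]; linarith
  obtain ⟨t, -, hcover⟩ := (isCompact_sphere y₀ (R + 1)).elim_nhds_subcover
    (connectedComponentIn S) fun z hz => hS.connectedComponentIn.mem_nhds
      (mem_connectedComponentIn (hsphere hz))
  set B := ⋃ z ∈ {z ∈ t | IsBounded (connectedComponentIn S z)}, connectedComponentIn S z
  have hB : IsBounded B := (isBounded_biUnion_finset _).2 fun z hz => (Finset.mem_filter.1 hz).2
  filter_upwards [isBounded_def.1 hB,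
    isBounded_def.1 (isBounded_closedBall (x := y₀) (r := R + 1))] with y hyB hyR hbdd
  rw [mem_compl_iff, mem_closedBall, not_le] at hyR
  obtain ⟨z, hzC, hz⟩ := exists_dist_eq_of_isBounded_connectedComponentIn (lt_add_one R)
    hyR.le hbdd (hcomp y)
  obtain ⟨z', hz't, hzz'⟩ := mem_iUnion₂.1 (hcover (mem_sphere.2 hz))
  have hCeq : connectedComponentIn S y = connectedComponentIn S z' := by
    rw [connectedComponentIn_eq hzC, connectedComponentIn_eq hzz']
  refine hyB (mem_iUnion₂.2 ⟨z', Finset.mem_filter.2 ⟨hz't, hCeq ▸ hbdd⟩, ?_⟩)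
  have hyS : y ∈ S := by
    rw [mem_compl_iff, mem_closedBall, not_le]; linarith
  exact hCeq ▸ mem_connectedComponentIn hyS

end ComponentsOutsideBalls

namespace OnePointExtension

variable {Y : Type*} [MetricSpace Y] {y₀ : Y} [MetricSpace (Option Y)]

lemma dist_some_none (hd : ∀ p q : Option Y, dist p q = rho y₀ p q) (a : Y) :
    dist (some a) (none : Option Y) = 1 / (1 + dist a y₀) :=
  hd _ _

lemma lipschitzWith_some (hd : ∀ p q : Option Y, dist p q = rho y₀ p q) :
    LipschitzWith 1 (some : Y → Option Y) :=
  LipschitzWith.of_dist_le_mul fun a b => by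
    rw [NNReal.coe_one, one_mul, hd]
    exact min_le_left _ _

lemma dist_some_none_lt_iff (hd : ∀ p q : Option Y, dist p q = rho y₀ p q) {a : Y} {ε : ℝ}
    (hε : 0 < ε) : dist (some a) (none : Option Y) < ε ↔ 1 / ε - 1 < dist a y₀ := by
  rw [dist_some_none hd, div_lt_iff₀ (by positivity), sub_lt_iff_lt_add, div_lt_iff₀ hε,
    mul_comm, add_comm]

lemma comap_some_nhds_none (hd : ∀ p q : Option Y, dist p q = rho y₀ p q) :
    comap some (𝓝 (none : Option Y)) = cobounded Y := by
  refine (nhds_basis_ball.comap some).ext (hasBasis_cobounded_compl_closedBall y₀)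
    (fun ε hε => ⟨1 / ε - 1, trivial, fun a ha => ?_⟩)
    (fun r _ => ⟨1 / (max r 0 + 1), by positivity, fun a ha => ?_⟩)
  · rw [mem_preimage, mem_ball, dist_some_none_lt_iff hd hε]
    simpa using ha
  · rw [mem_preimage, mem_ball, dist_some_none_lt_iff hd (by positivity),
      one_div_one_div, add_sub_cancel_right] at ha
    simpa using (le_max_left r 0).trans_lt ha

lemma tendsto_some_cobounded (hd : ∀ p q : Option Y, dist p q = rho y₀ p q) :
    Tendsto some (cobounded Y) (𝓝 (none : Option Y)) :=
  tendsto_iff_comap.2 (comap_some_nhds_none hd).ge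

lemma none_mem_closure_image_some (hd : ∀ p q : Option Y, dist p q = rho y₀ p q) {A : Set Y}
    (hA : ¬ IsBounded A) : (none : Option Y) ∈ closure (some '' A) := by
  refine mem_closure_iff_nhds.2 fun t ht => ?_
  obtain ⟨a, haA, hat⟩ := not_subset.1 fun hsub =>
    hA ((isBounded_compl_iff.2 (tendsto_some_cobounded hd ht)).subset hsub)
  exact ⟨some a, not_not.1 hat, a, haA, rfl⟩

lemma isPreconnected_insert_none_image_some (hd : ∀ p q : Option Y, dist p q = rho y₀ p q)
    {A : Set Y} (hA : IsPreconnected A) (hAb : ¬ IsBounded A) :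
    IsPreconnected (insert none (some '' A)) :=
  (hA.image _ (lipschitzWith_some hd).continuous.continuousOn).subset_closure (subset_insert _ _)
    (insert_subset (none_mem_closure_image_some hd hAb) subset_closure)

lemma map_some_nhds (hd : ∀ p q : Option Y, dist p q = rho y₀ p q) (a : Y) :
    map some (𝓝 a) = 𝓝 (some a) := by
  refine le_antisymm ((lipschitzWith_some hd).continuous.tendsto a) fun s hs => ?_
  obtain ⟨δ, hδ, hδs⟩ := Metric.mem_nhds_iff.1 (mem_map.1 hs)
  refine Metric.mem_nhds_iff.2 ⟨min δ (1 / (1 + dist a y₀)), lt_min hδ (by positivity), ?_⟩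
  rintro (_ | b) hb
  · rw [mem_ball, dist_comm, dist_some_none hd] at hb
    exact absurd (hb.trans_le (min_le_right _ _)) (lt_irrefl _)
  · rw [mem_ball, hd] at hb
    rcases min_lt_iff.1 hb with h | h
    · exact hδs (mem_ball.2 (h.trans_le (min_le_left _ _)))
    · have : 0 < 1 / (1 + dist b y₀) := by positivity
      linarith [min_le_right δ (1 / (1 + dist a y₀))]

lemma compactSpace (hd : ∀ p q : Option Y, dist p q = rho y₀ p q) [ProperSpace Y] :
    CompactSpace (Option Y) := by
  refine ⟨isCompact_iff_ultrafilter_le_nhds.2 fun f _ => ?_⟩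
  by_cases h : (f : Filter (Option Y)) ≤ 𝓝 none
  · exact ⟨none, mem_univ _, h⟩
  obtain ⟨U, hU, hUf⟩ := Filter.not_le.1 h
  have hK : IsBounded (some ⁻¹' U)ᶜ :=
    isBounded_compl_iff.2 (tendsto_some_cobounded hd hU)
  have hsub : Uᶜ ⊆ some '' closure (some ⁻¹' U)ᶜ := by
    rintro (_ | a) ha
    · exact absurd (mem_of_mem_nhds hU) ha
    · exact mem_image_of_mem _ (subset_closure ha)
  obtain ⟨x, -, hx⟩ := (hK.isCompact_closure.image (lipschitzWith_some hd).continuous)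
    |>.ultrafilter_le_nhds f
      (le_principal_iff.2 <| mem_of_superset (f.compl_mem_iff_notMem.2 hUf) hsub)
  exact ⟨x, mem_univ _, hx⟩

lemma connectedSpace (hd : ∀ p q : Option Y, dist p q = rho y₀ p q)
    (hcomp : ∀ y : Y, ¬ IsBounded (connectedComponent y)) : ConnectedSpace (Option Y) := by
  refine connectedSpace_iff_univ.2 ⟨⟨none, mem_univ _⟩, isPreconnected_of_forall none ?_⟩
  rintro (_ | a) -
  · exact ⟨{none}, subset_univ _, rfl, rfl, isPreconnected_singleton⟩
  · exact ⟨_, subset_univ _, mem_insert _ _,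
      mem_insert_of_mem _ (mem_image_of_mem _ mem_connectedComponent),
      isPreconnected_insert_none_image_some hd isPreconnected_connectedComponent (hcomp a)⟩

lemma exists_isPreconnected_nhds_none (hd : ∀ p q : Option Y, dist p q = rho y₀ p q)
    [ProperSpace Y] [LocallyConnectedSpace Y]
    (hcomp : ∀ y : Y, ¬ IsBounded (connectedComponent y)) {U : Set (Option Y)}
    (hU : U ∈ 𝓝 none) : ∃ V ∈ 𝓝 none, IsPreconnected V ∧ V ⊆ U := by
  obtain ⟨R, -, hR⟩ := (hasBasis_cobounded_compl_closedBall y₀).mem_iff.1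
    (tendsto_some_cobounded hd hU)
  have hfar := eventually_cobounded_not_isBounded_connectedComponentIn hcomp y₀ R
  rw [← comap_some_nhds_none hd, eventually_comap] at hfar
  refine ⟨connectedComponentIn U none, ?_, isPreconnected_connectedComponentIn,
    connectedComponentIn_subset _ _⟩
  filter_upwards [hfar, hU] with p hp hpU
  rcases p with _ | b
  · exact mem_connectedComponentIn hpU
  have hb := hp b rfl
  have hbS : b ∈ (closedBall y₀ R)ᶜ := by
    by_contra h
    exact hb (by simp [connectedComponentIn_eq_empty h])
  refine (isPreconnected_insert_none_image_some hd isPreconnected_connectedComponentIn hb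
    |>.subset_connectedComponentIn (mem_insert _ _) (insert_subset (mem_of_mem_nhds hU)
      (image_subset_iff.2 ((connectedComponentIn_subset _ _).trans hR))))
    (mem_insert_of_mem _ (mem_image_of_mem _ (mem_connectedComponentIn hbS)))

lemma locallyConnectedSpace (hd : ∀ p q : Option Y, dist p q = rho y₀ p q)
    [ProperSpace Y] [LocallyConnectedSpace Y]
    (hcomp : ∀ y : Y, ¬ IsBounded (connectedComponent y)) :
    LocallyConnectedSpace (Option Y) := by
  refine locallyConnectedSpace_iff_connected_subsets.2 ?_
  rintro (_ | a) U hU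
  · exact exists_isPreconnected_nhds_none hd hcomp hU
  rw [← map_some_nhds hd] at hU
  obtain ⟨V, hV, hVc, hVU⟩ := locallyConnectedSpace_iff_connected_subsets.1 ‹_› a _ hU
  exact ⟨some '' V, map_some_nhds hd a ▸ image_mem_map hV,
    hVc.image _ (lipschitzWith_some hd).continuous.continuousOn, image_subset_iff.2 hVU⟩

lemma isometry_optionMap {X : Type*} [MetricSpace X] {x₀ : X} [MetricSpace (Option X)]
    (hm : ∀ p q : Option X, dist p q = rho x₀ p q) {f : X → Y} (hf : Isometry f)
    (hd : ∀ p q : Option Y, dist p q = rho (f x₀) p q) : Isometry (Option.map f) :=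
  Isometry.of_dist_eq fun p q => by
    rcases p with _ | x <;> rcases q with _ | y <;>
      simp only [hm, hd, Option.map_none, Option.map_some, rho, hf.dist_eq]

lemma denseRange_optionMap (hd : ∀ p q : Option Y, dist p q = rho y₀ p q) {X : Type*}
    {f : X → Y} (hf : DenseRange f) : DenseRange (Option.map f) := by
  rintro (_ | y)
  · exact subset_closure ⟨none, rfl⟩
  refine closure_mono ?_ ((lipschitzWith_some hd).continuous.range_subset_closure_image_dense hf
    ⟨y, rfl⟩)
  rintro _ ⟨_, ⟨x, rfl⟩, rfl⟩
  exact ⟨some x, rfl⟩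

end OnePointExtension

open UniformSpace

noncomputable def IsUniformInducing.completionEquiv {α β : Type*} [UniformSpace α]
    [UniformSpace β] [CompleteSpace β] [T0Space β] {f : α → β} (hf : IsUniformInducing f)
    (hdense : DenseRange f) : Completion α ≃ᵤ β :=
  Completion.cPkg.compareEquiv ⟨β, f, inferInstance, inferInstance, inferInstance, hf, hdense⟩

/-- if the completion of `X` is proper, locally connected and has
no bounded connected component, then the completion of the one-point extension
`(αX, ρ)` is a Peano continuum: compact, connected and locally connected. -/
theorem completion_onePointExtension_peano
    {X : Type*} [MetricSpace X] (x₀ : X)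
    (hproper : ProperSpace (UniformSpace.Completion X))
    (hlc : LocallyConnectedSpace (UniformSpace.Completion X))
    (hcomp : ∀ y : UniformSpace.Completion X, ¬ IsBounded (connectedComponent y))
    -- `(αX, ρ)`: the metric on `Option X` is the one-point extension metric `ρ`
    [m : MetricSpace (Option X)]
    (hm : ∀ p q : Option X, dist p q = rho x₀ p q) :
    CompactSpace (UniformSpace.Completion (Option X)) ∧
      ConnectedSpace (UniformSpace.Completion (Option X)) ∧
      LocallyConnectedSpace (UniformSpace.Completion (Option X)) := by
  let _ : MetricSpace (Option (Completion X)) := rhoMetricSpace (x₀ : Completion X)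
  have hd : ∀ p q : Option (Completion X), dist p q = rho (x₀ : Completion X) p q :=
    fun _ _ => rfl
  -- compactness also provides the completeness that `completionEquiv` needs
  have := OnePointExtension.compactSpace hd
  let e : Completion (Option X) ≃ₜ Option (Completion X) :=
    (OnePointExtension.isometry_optionMap hm Completion.coe_isometry hd).isUniformInducing
      |>.completionEquiv (OnePointExtension.denseRange_optionMap hd Completion.denseRange_coe)
      |>.toHomeomorph
  have := OnePointExtension.locallyConnectedSpace hd hcomp
  exact ⟨e.symm.compactSpace, e.connectedSpace_iff.2 (OnePointExtension.connectedSpace hd hcomp),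
    e.locallyConnectedSpace⟩
end

section
/- Let (X,d) be a metric space with basepoint x₀ and (αX, ρ) its one-point extension. The image of the embedding e : Cld_AW(X) → Cld_H(αX), e(A) = A ∪ {∞}, is exactly Cld_H(αX | {∞}) \ {{∞}}, the set of closed subsets of αX containing ∞ other than the singleton {∞}; consequently Cld_AW(X) is homeomorphic to Cld_H(αX | {∞}) \ {{∞}}. -/
open Metric Set Topology Filter

/-- The set of all nonempty closed subsets of a topological space. -/
def Cld (X : Type*) [TopologicalSpace X] : Type _ :=
  {A : Set X // A.Nonempty ∧ IsClosed A}

/-- The Attouch-Wets metric with basepoint `x₀`. -/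
noncomputable def dAW {X : Type*} [MetricSpace X] (x₀ : X) (A B : Set X) : ℝ :=
  ⨆ i : ℕ, min (1 / (i : ℝ))
    (sSup {r : ℝ | ∃ x : X, dist x x₀ ≤ (i : ℝ) ∧ r = |infDist x A - infDist x B|})

/-- The hyperspace `Cld_AW(X)` with the topology generated by `d_AW`. -/
def CldAW (X : Type*) [MetricSpace X] (x₀ : X) : Type _ := Cld X

noncomputable instance {X : Type*} [MetricSpace X] (x₀ : X) :
    TopologicalSpace (CldAW X x₀) :=
  .generateFrom {U | ∃ (A : CldAW X x₀) (ε : ℝ), 0 < ε ∧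
    U = {B : CldAW X x₀ | dAW x₀ A.1 B.1 < ε}}

/-- The topology generated by a distance function. -/
def distTop {Z : Type*} (ρ : Z → Z → ℝ) : TopologicalSpace Z :=
  .generateFrom {U | ∃ (z : Z) (ε : ℝ), 0 < ε ∧ U = {w : Z | ρ z w < ε}}

/-- Distance from a point to a set with respect to a distance function. -/
noncomputable def infRho {Z : Type*} (ρ : Z → Z → ℝ) (z : Z) (A : Set Z) : ℝ :=
  sInf (ρ z '' A)

/-- The Hausdorff distance `d_H(A,B) = sup_z |d(z,A) − d(z,B)|` associated with
a distance function. -/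
noncomputable def hausRho {Z : Type*} (ρ : Z → Z → ℝ) (A B : Set Z) : ℝ :=
  ⨆ z : Z, |infRho ρ z A - infRho ρ z B|

/-- The hyperspace `Cld_H(αX)`: nonempty `ρ`-closed subsets of `αX = X ∪ {∞}`,
with the topology generated by the Hausdorff metric of `ρ`. -/
def CldHAlpha (X : Type*) [MetricSpace X] (x₀ : X) : Type _ :=
  {A : Set (Option X) // A.Nonempty ∧ @IsClosed _ (distTop (rho x₀)) A}

noncomputable instance {X : Type*} [MetricSpace X] (x₀ : X) :
    TopologicalSpace (CldHAlpha X x₀) :=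
  .generateFrom {U | ∃ (A : CldHAlpha X x₀) (ε : ℝ), 0 < ε ∧
    U = {B : CldHAlpha X x₀ | hausRho (rho x₀) A.1 B.1 < ε}}

/-! The key identity is `infRho ρ (some x) (A ∪ {∞}) = min (1 / (1 + d(x, x₀))) (d(x, A))`.
On `Xᵢ` the Hausdorff term is therefore bounded by the Attouch–Wets term, and off `Xᵢ` the
truncation makes it at most `1 / (1 + i)`, so `A ↦ A ∪ {∞}` is uniformly continuous.
Conversely, a small Hausdorff distance makes every point of `A` in a large ball close to `B`
and vice versa, which bounds `|d(x, A) - d(x, B)|` on `Xᵢ`; this gives continuity of the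
inverse `F ↦ F ∩ X` on the closed sets containing `∞` other than `{∞}`. -/

section DistTop

variable {Y : Type*} {D : Y → Y → ℝ}

lemma isOpen_distTop_of_forall_exists_ball (hself : ∀ y, D y y = 0) {S : Set Y}
    (h : ∀ y ∈ S, ∃ ε > 0, {w | D y w < ε} ⊆ S) : IsOpen[distTop D] S := by
  choose! ε hε hεS using h
  have hS : S = ⋃ y ∈ S, {w | D y w < ε y} :=
    Subset.antisymm (fun y hy => mem_biUnion hy (by simpa [hself y] using hε y hy))
      (iUnion₂_subset hεS)
  rw [hS]
  exact @isOpen_biUnion _ _ (distTop D) _ _ fun y hy =>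
    TopologicalSpace.isOpen_generateFrom_of_mem ⟨y, ε y, hε y hy, rfl⟩

lemma exists_ball_subset_of_isOpen_distTop (htri : ∀ a b c, D a c ≤ D a b + D b c)
    {U : Set Y} (hU : IsOpen[distTop D] U) {y : Y} (hy : y ∈ U) :
    ∃ ε > 0, {w | D y w < ε} ⊆ U := by
  induction hU with
  | basic V hV =>
    obtain ⟨z, ε, -, rfl⟩ := hV
    exact ⟨ε - D z y, sub_pos.2 hy, fun w hw => by
      simp only [mem_ofPred_eq] at hw ⊢; linarith [htri z y w]⟩
  | univ => exact ⟨1, one_pos, subset_univ _⟩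
  | inter V W _ _ ihV ihW =>
    obtain ⟨ε₁, hε₁, h₁⟩ := ihV hy.1
    obtain ⟨ε₂, hε₂, h₂⟩ := ihW hy.2
    exact ⟨min ε₁ ε₂, lt_min hε₁ hε₂, fun w (hw : D y w < min ε₁ ε₂) =>
      ⟨h₁ (lt_min_iff.1 hw).1, h₂ (lt_min_iff.1 hw).2⟩⟩
  | sUnion s _ ih =>
    obtain ⟨V, hV, hyV⟩ := hy
    obtain ⟨ε, hε, h⟩ := ih V hV hyV
    exact ⟨ε, hε, h.trans (subset_sUnion_of_mem hV)⟩

lemma induced_distTop (hself : ∀ y, D y y = 0) (htri : ∀ a b c, D a c ≤ D a b + D b c)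
    {W : Type*} (f : W → Y) :
    TopologicalSpace.induced f (distTop D) = distTop fun a b => D (f a) (f b) := by
  let _ : TopologicalSpace Y := distTop D
  refine le_antisymm (le_generateFrom ?_) ?_
  · rintro _ ⟨a, ε, hε, rfl⟩
    exact isOpen_induced_iff.2
      ⟨_, TopologicalSpace.isOpen_generateFrom_of_mem ⟨f a, ε, hε, rfl⟩, rfl⟩
  · intro S hS
    obtain ⟨U, hU, rfl⟩ := isOpen_induced_iff.1 hS
    refine isOpen_distTop_of_forall_exists_ball (fun a => hself (f a)) fun a ha => ?_
    obtain ⟨ε, hε, hεU⟩ := exists_ball_subset_of_isOpen_distTop htri hU ha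
    exact ⟨ε, hε, fun b hb => hεU hb⟩

lemma continuous_distTop_of_forall_exists_dist_lt {Z : Type*} {E : Z → Z → ℝ}
    (hself : ∀ y, D y y = 0) (htri : ∀ a b c, E a c ≤ E a b + E b c) {f : Y → Z}
    (hf : ∀ y, ∀ ε > 0, ∃ δ > 0, ∀ y', D y y' < δ → E (f y) (f y') < ε) :
    Continuous[distTop D, distTop E] f := by
  refine continuous_generateFrom_iff.2 ?_
  rintro _ ⟨z, ε, -, rfl⟩
  refine isOpen_distTop_of_forall_exists_ball hself fun y hy => ?_
  obtain ⟨δ, hδ, hδf⟩ := hf y (ε - E z (f y)) (sub_pos.2 hy)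
  exact ⟨δ, hδ, fun y' hy' => by
    simp only [mem_preimage, mem_ofPred_eq]; linarith [htri z (f y) (f y'), hδf y' hy']⟩

end DistTop

section Rho

variable {X : Type*} [MetricSpace X] (x₀ : X)

lemma one_div_one_add_dist_le_dist_add (x y : X) :
    1 / (1 + dist x x₀) ≤ dist x y + 1 / (1 + dist y x₀) := by
  have hy : dist y x₀ ≤ dist x y + dist x x₀ := dist_triangle_left y x₀ x
  have hxy : 0 ≤ dist x y * ((1 + dist x x₀) * (1 + dist y x₀) - 1) := by
    have := dist_nonneg (x := x) (y := x₀); have := dist_nonneg (x := y) (y := x₀)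
    exact mul_nonneg dist_nonneg (by nlinarith)
  rw [add_div' _ _ _ (by positivity), div_le_div_iff₀ (by positivity) (by positivity)]
  linarith

lemma rho_self_s14 (z : Option X) : rho x₀ z z = 0 := by
  cases z with
  | none => rfl
  | some x =>
    show min (dist x x) _ = 0
    rw [dist_self]
    exact min_eq_left (by positivity)

lemma rho_nonneg (z w : Option X) : 0 ≤ rho x₀ z w := by
  cases z <;> cases w <;> simp only [rho] <;> positivity

lemma rho_le_two (z w : Option X) : rho x₀ z w ≤ 2 := by
  have h : ∀ x : X, 1 / (1 + dist x x₀) ≤ 1 := fun x =>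
    (div_le_one (by positivity)).2 (le_add_of_nonneg_right dist_nonneg)
  cases z with
  | none => cases w with
    | none => norm_num [rho]
    | some y => exact (h y).trans one_le_two
  | some x => cases w with
    | none => exact (h x).trans one_le_two
    | some y => exact (min_le_right _ _).trans (by linarith [h x, h y])

lemma rho_some_le_dist (x y : X) : rho x₀ (some x) (some y) ≤ dist x y := min_le_left _ _

lemma rho_triangle_s14 (a b c : Option X) : rho x₀ a c ≤ rho x₀ a b + rho x₀ b c := by
  have hpos : ∀ x : X, 0 < 1 / (1 + dist x x₀) := fun x => by positivity
  have hlip := one_div_one_add_dist_le_dist_add x₀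
  rcases a with _ | x <;> rcases b with _ | y <;> rcases c with _ | z <;> simp only [rho]
  · norm_num
  · linarith
  · linarith [hpos y]
  · rw [← min_add_add_left]
    exact le_min (by linarith [hlip z y, dist_comm y z]) (by linarith [hpos y])
  · linarith
  · exact min_le_right _ _
  · rw [← min_add_add_right]
    exact le_min (by linarith [hlip x y]) (by linarith [hpos y])
  · simp only [min_def]
    split_ifs <;> linarith [dist_triangle x y z, hlip x y, hlip z y, dist_comm y z, hpos y]

end Rho

section InsertInfty

variable {X : Type*}

def insertInfty (A : Set X) : Set (Option X) := insert none (some '' A)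

lemma none_mem_insertInfty (A : Set X) : none ∈ insertInfty A := mem_insert _ _

lemma preimage_some_insertInfty (A : Set X) : some ⁻¹' insertInfty A = A := by
  ext x; simp [insertInfty]

lemma insertInfty_preimage_some {F : Set (Option X)} (hF : none ∈ F) :
    insertInfty (some ⁻¹' F) = F := by
  ext (_ | x) <;> simp [insertInfty, hF]

lemma insertInfty_ne_singleton {A : Set X} (hA : A.Nonempty) :
    insertInfty A ≠ {none} := by
  obtain ⟨a, ha⟩ := hA
  intro h
  have : some a ∈ insertInfty A := mem_insert_of_mem _ (mem_image_of_mem _ ha)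
  simp [h] at this

lemma preimage_some_nonempty {F : Set (Option X)} (hF : none ∈ F) (hF' : F ≠ {none}) :
    (some ⁻¹' F).Nonempty := by
  contrapose! hF'
  rw [← insertInfty_preimage_some hF, hF', insertInfty, image_empty, insert_empty_eq]

end InsertInfty

section OnePointExtension

variable {X : Type*} [MetricSpace X] (x₀ : X)

lemma infRho_nonneg (z : Option X) (F : Set (Option X)) : 0 ≤ infRho (rho x₀) z F :=
  Real.sInf_nonneg (forall_mem_image.2 fun w _ => rho_nonneg x₀ z w)

lemma infRho_le {z w : Option X} {F : Set (Option X)} (hw : w ∈ F) :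
    infRho (rho x₀) z F ≤ rho x₀ z w :=
  csInf_le ⟨0, forall_mem_image.2 fun w _ => rho_nonneg x₀ z w⟩ (mem_image_of_mem _ hw)

lemma infRho_le_two (z : Option X) (F : Set (Option X)) : infRho (rho x₀) z F ≤ 2 := by
  rcases F.eq_empty_or_nonempty with rfl | ⟨w, hw⟩
  · simp [infRho]
  · exact (infRho_le x₀ hw).trans (rho_le_two x₀ z w)

lemma infRho_none {F : Set (Option X)} (hF : none ∈ F) : infRho (rho x₀) none F = 0 :=
  le_antisymm ((infRho_le x₀ hF).trans_eq (rho_self_s14 x₀ none)) (infRho_nonneg x₀ none F)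

lemma infRho_some_insertInfty {A : Set X} (hA : A.Nonempty) (x : X) :
    infRho (rho x₀) (some x) (insertInfty A) = min (1 / (1 + dist x x₀)) (infDist x A) := by
  refine le_antisymm ?_ ?_
  · refine le_min (infRho_le x₀ (none_mem_insertInfty A)) ?_
    refine le_of_forall_pos_le_add fun η hη => ?_
    obtain ⟨a, ha, hxa⟩ := (infDist_lt_iff hA).1 (lt_add_of_pos_right (infDist x A) hη)
    exact (infRho_le x₀ (mem_insert_of_mem _ (mem_image_of_mem _ ha))).trans
      ((rho_some_le_dist x₀ x a).trans hxa.le)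
  · refine le_csInf ((insert_nonempty _ _).image _) ?_
    rintro _ ⟨_, rfl | ⟨a, ha, rfl⟩, rfl⟩
    · exact min_le_left _ _
    · show _ ≤ min (dist x a) (1 / (1 + dist x x₀) + 1 / (1 + dist a x₀))
      rw [min_comm (dist x a)]
      exact min_le_min (le_add_of_nonneg_right (by positivity)) (infDist_le_dist_of_mem ha)

lemma le_hausRho (z : Option X) (F G : Set (Option X)) :
    |infRho (rho x₀) z F - infRho (rho x₀) z G| ≤ hausRho (rho x₀) F G := by
  refine le_ciSup (f := fun z => |infRho (rho x₀) z F - infRho (rho x₀) z G|) ⟨2, ?_⟩ z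
  rintro _ ⟨w, rfl⟩
  have := infRho_nonneg x₀ w F; have := infRho_nonneg x₀ w G
  have := infRho_le_two x₀ w F; have := infRho_le_two x₀ w G
  exact abs_sub_le_iff.2 ⟨by linarith, by linarith⟩

lemma hausRho_le {F G : Set (Option X)} {t : ℝ}
    (h : ∀ z, |infRho (rho x₀) z F - infRho (rho x₀) z G| ≤ t) :
    hausRho (rho x₀) F G ≤ t :=
  ciSup_le h

lemma hausRho_self (F : Set (Option X)) : hausRho (rho x₀) F F = 0 := by
  simp [hausRho]

lemma hausRho_triangle (F G H : Set (Option X)) :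
    hausRho (rho x₀) F H ≤ hausRho (rho x₀) F G + hausRho (rho x₀) G H :=
  hausRho_le x₀ fun z => (abs_sub_le _ _ _).trans
    (add_le_add (le_hausRho x₀ z F G) (le_hausRho x₀ z G H))

lemma isClosed_insertInfty {A : Set X} (hA : A.Nonempty) (hAc : IsClosed A) :
    IsClosed[distTop (rho x₀)] (insertInfty A) := by
  let _ : TopologicalSpace (Option X) := distTop (rho x₀)
  refine isOpen_compl_iff.1 (isOpen_distTop_of_forall_exists_ball (rho_self_s14 x₀) fun z hz => ?_)
  cases z with
  | none => exact absurd (none_mem_insertInfty A) hz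
  | some x =>
    have hx : x ∉ A := fun h => hz (mem_insert_of_mem _ (mem_image_of_mem _ h))
    refine ⟨infRho (rho x₀) (some x) (insertInfty A), ?_, fun w hw hwA => ?_⟩
    · rw [infRho_some_insertInfty x₀ hA]
      exact lt_min (by positivity) ((hAc.notMem_iff_infDist_pos hA).1 hx)
    · exact (infRho_le x₀ hwA).not_gt hw

lemma isClosed_preimage_some {F : Set (Option X)} (hF : IsClosed[distTop (rho x₀)] F) :
    IsClosed (some ⁻¹' F) := by
  let _ : TopologicalSpace (Option X) := distTop (rho x₀)
  refine hF.preimage (continuous_generateFrom_iff.2 ?_)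
  rintro _ ⟨z, ε, -, rfl⟩
  refine Metric.isOpen_iff.2 fun x (hx : rho x₀ z (some x) < ε) => ?_
  refine ⟨ε - rho x₀ z (some x), sub_pos.2 hx, fun y hy => ?_⟩
  have := rho_triangle_s14 x₀ z (some x) (some y)
  have := rho_some_le_dist x₀ x y
  rw [mem_ball, dist_comm] at hy
  show rho x₀ z (some y) < ε
  linarith

end OnePointExtension

section AttouchWets

variable {X : Type*} [MetricSpace X] (x₀ : X)

noncomputable def awSup (A B : Set X) (i : ℕ) : ℝ :=
  sSup {r : ℝ | ∃ x : X, dist x x₀ ≤ (i : ℝ) ∧ r = |infDist x A - infDist x B|}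

lemma le_awSup {A B : Set X} (hA : A.Nonempty) (hB : B.Nonempty) {i : ℕ} {x : X}
    (hx : dist x x₀ ≤ i) : |infDist x A - infDist x B| ≤ awSup x₀ A B i := by
  obtain ⟨a, ha⟩ := hA
  obtain ⟨b, hb⟩ := hB
  refine le_csSup ⟨2 * i + dist a x₀ + dist b x₀, ?_⟩ ⟨x, hx, rfl⟩
  rintro _ ⟨y, hy, rfl⟩
  have hyA := (infDist_le_dist_of_mem ha (x := y)).trans (dist_triangle y x₀ a)
  have hyB := (infDist_le_dist_of_mem hb (x := y)).trans (dist_triangle y x₀ b)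
  rw [dist_comm x₀] at hyA hyB
  have := infDist_nonneg (x := y) (s := A); have := infDist_nonneg (x := y) (s := B)
  exact abs_sub_le_iff.2 ⟨by linarith, by linarith⟩

lemma awSup_nonneg {A B : Set X} (hA : A.Nonempty) (hB : B.Nonempty) (i : ℕ) :
    0 ≤ awSup x₀ A B i :=
  (abs_nonneg _).trans (le_awSup x₀ hA hB (x := x₀) (by simp))

lemma awSup_le {A B : Set X} {i : ℕ} {t : ℝ}
    (h : ∀ x, dist x x₀ ≤ i → |infDist x A - infDist x B| ≤ t) : awSup x₀ A B i ≤ t :=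
  csSup_le ⟨_, x₀, by simp, rfl⟩ fun _ ⟨x, hx, hr⟩ => hr ▸ h x hx

lemma min_awSup_le_dAW (A B : Set X) (i : ℕ) :
    min (1 / (i : ℝ)) (awSup x₀ A B i) ≤ dAW x₀ A B := by
  refine le_ciSup (f := fun i : ℕ => min (1 / (i : ℝ)) (awSup x₀ A B i)) ⟨1, ?_⟩ i
  rintro _ ⟨j, rfl⟩
  exact (min_le_left _ _).trans ((one_div (j : ℝ)).trans_le (Nat.cast_inv_le_one j))

lemma dAW_self (A : Set X) : dAW x₀ A A = 0 := by
  refine le_antisymm (ciSup_le fun i => ?_)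
    ((le_min (by simp) ?_).trans (min_awSup_le_dAW x₀ A A 0))
  · exact (min_le_right _ _).trans (awSup_le x₀ fun x _ => by simp)
  · exact le_csSup ⟨0, fun _ ⟨x, _, hr⟩ => by simp [hr]⟩ ⟨x₀, by simp, by simp⟩

lemma dAW_triangle {A B C : Set X} (hA : A.Nonempty) (hB : B.Nonempty) (hC : C.Nonempty) :
    dAW x₀ A C ≤ dAW x₀ A B + dAW x₀ B C := by
  refine ciSup_le fun i => ?_
  set a : ℝ := 1 / (i : ℝ)
  have ha : 0 ≤ a := by positivity
  have hAC : awSup x₀ A C i ≤ awSup x₀ A B i + awSup x₀ B C i :=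
    awSup_le x₀ fun x hx => (abs_sub_le _ (infDist x B) _).trans
      (add_le_add (le_awSup x₀ hA hB hx) (le_awSup x₀ hB hC hx))
  have hAB := awSup_nonneg x₀ hA hB i
  have hBC := awSup_nonneg x₀ hB hC i
  calc min a (awSup x₀ A C i)
      ≤ min a (awSup x₀ A B i) + min a (awSup x₀ B C i) := by
        simp only [min_def]; split_ifs <;> linarith
    _ ≤ dAW x₀ A B + dAW x₀ B C :=
        add_le_add (min_awSup_le_dAW x₀ A B i) (min_awSup_le_dAW x₀ B C i)

lemma abs_infDist_sub_lt_of_dAW_lt {A B : Set X} {δ : ℝ} {i : ℕ} {x : X}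
    (hA : A.Nonempty) (hB : B.Nonempty) (hd : dAW x₀ A B < δ) (hδ : δ ≤ 1 / (i : ℝ))
    (hx : dist x x₀ ≤ i) : |infDist x A - infDist x B| < δ := by
  have h := (min_awSup_le_dAW x₀ A B i).trans_lt hd
  rw [min_lt_iff, ← not_le] at h
  exact (le_awSup x₀ hA hB hx).trans_lt (h.resolve_left (not_not.2 hδ))

lemma dAW_le_max_of_forall_dist_le {A B : Set X} {i : ℕ} {t : ℝ}
    (h : ∀ x, dist x x₀ ≤ i → |infDist x A - infDist x B| ≤ t) :
    dAW x₀ A B ≤ max t (1 / ((i : ℝ) + 1)) := by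
  refine ciSup_le fun j => ?_
  rcases le_or_gt j i with hj | hj
  · refine (min_le_right _ _).trans (le_max_of_le_left (awSup_le x₀ fun x hx => h x ?_))
    exact hx.trans (Nat.cast_le.2 hj)
  · refine (min_le_left _ _).trans (le_max_of_le_right ?_)
    exact one_div_le_one_div_of_le (by positivity) (by exact_mod_cast hj)

end AttouchWets

section Estimates

variable {X : Type*} [MetricSpace X] (x₀ : X)

lemma hausRho_comm (F G : Set (Option X)) : hausRho (rho x₀) F G = hausRho (rho x₀) G F := by
  simp only [hausRho, abs_sub_comm]

lemma abs_infRho_insertInfty_sub_le {A B : Set X} (hA : A.Nonempty) (hB : B.Nonempty) (x : X) :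
    |infRho (rho x₀) (some x) (insertInfty A) - infRho (rho x₀) (some x) (insertInfty B)| ≤
      min (1 / (1 + dist x x₀)) |infDist x A - infDist x B| := by
  rw [infRho_some_insertInfty x₀ hA, infRho_some_insertInfty x₀ hB]
  set c := 1 / (1 + dist x x₀)
  have hc : 0 ≤ c := by positivity
  have hcA := le_min hc (infDist_nonneg (x := x) (s := A))
  have hcB := le_min hc (infDist_nonneg (x := x) (s := B))
  refine le_min (abs_sub_le_iff.2 ⟨?_, ?_⟩) ?_
  · linarith [min_le_left c (infDist x A)]
  · linarith [min_le_left c (infDist x B)]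
  · simpa using abs_min_sub_min_le_max c (infDist x A) c (infDist x B)

lemma infDist_lt_of_mem_of_hausRho_lt {A B : Set X} (hB : B.Nonempty) {y : X} (hy : y ∈ A)
    {δ : ℝ} (hd : hausRho (rho x₀) (insertInfty A) (insertInfty B) < δ)
    (hδ : δ ≤ 1 / (1 + dist y x₀)) : infDist y B < δ := by
  have h := (le_hausRho x₀ (some y) _ _).trans_lt hd
  rw [infRho_some_insertInfty x₀ ⟨y, hy⟩, infRho_some_insertInfty x₀ hB,
    infDist_zero_of_mem hy, min_eq_right (by positivity), zero_sub, abs_neg,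
    abs_of_nonneg (le_min (by positivity) infDist_nonneg)] at h
  exact (min_lt_iff.1 h).resolve_left hδ.not_gt

lemma infDist_le_infDist_add_of_forall_mem {A B : Set X} (hA : A.Nonempty) {x : X} {M δ : ℝ}
    (hx : dist x x₀ + infDist x A < M)
    (hAB : ∀ a ∈ A, dist a x₀ < M → infDist a B ≤ δ) :
    infDist x B ≤ infDist x A + δ := by
  refine le_of_forall_pos_le_add fun η hη => ?_
  obtain ⟨a, ha, hxa⟩ := (infDist_lt_iff hA).1
    (lt_add_of_pos_right (infDist x A) (lt_min hη (sub_pos.2 hx)))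
  have hmin_η := min_le_left η (M - (dist x x₀ + infDist x A))
  have hmin_M := min_le_right η (M - (dist x x₀ + infDist x A))
  have haM : dist a x₀ < M := by linarith [dist_triangle_left a x₀ x]
  calc infDist x B ≤ infDist a B + dist x a := infDist_le_infDist_add_dist
    _ ≤ infDist x A + δ + η := by linarith [hAB a ha haM]

lemma exists_forall_dAW_lt_hausRho_lt {ε : ℝ} (hε : 0 < ε) :
    ∃ δ > 0, ∀ A B : Set X, A.Nonempty → B.Nonempty → dAW x₀ A B < δ →
      hausRho (rho x₀) (insertInfty A) (insertInfty B) < ε := by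
  obtain ⟨n, hn⟩ := exists_nat_one_div_lt hε
  refine ⟨min (ε / 2) (1 / ((n + 1 : ℕ) : ℝ)), by positivity, fun A B hA hB hd => ?_⟩
  refine lt_of_le_of_lt (hausRho_le x₀ fun z => ?_) (max_lt (half_lt_self hε) hn)
  cases z with
  | none =>
    simp only [infRho_none x₀ (none_mem_insertInfty _), sub_self, abs_zero]
    positivity
  | some x =>
    refine (abs_infRho_insertInfty_sub_le x₀ hA hB x).trans ?_
    rcases le_or_gt (dist x x₀) (n + 1 : ℕ) with hx | hx
    · have := abs_infDist_sub_lt_of_dAW_lt x₀ hA hB hd (min_le_right _ _) hx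
      exact le_max_of_le_left <| (min_le_right _ _).trans <| this.le.trans (min_le_left _ _)
    · refine le_max_of_le_right <| (min_le_left _ _).trans ?_
      push_cast at hx
      exact one_div_le_one_div_of_le (by positivity) (by linarith)

lemma exists_forall_hausRho_lt_dAW_lt {A : Set X} (hA : A.Nonempty) {ε : ℝ} (hε : 0 < ε) :
    ∃ δ > 0, ∀ B : Set X, B.Nonempty →
      hausRho (rho x₀) (insertInfty A) (insertInfty B) < δ → dAW x₀ A B < ε := by
  obtain ⟨a₀, ha₀⟩ := hA
  obtain ⟨i, hi⟩ := exists_nat_one_div_lt hε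
  set M : ℝ := 2 * i + dist a₀ x₀ + 2
  set δ : ℝ := min (ε / 2) (1 / (1 + M))
  have hδε : δ ≤ ε / 2 := min_le_left _ _
  have hδM : δ ≤ 1 / (1 + M) := min_le_right _ _
  have ha₀x₀ : 0 ≤ dist a₀ x₀ := dist_nonneg
  have hδ1 : δ ≤ 1 :=
    hδM.trans ((div_le_one (by positivity)).2 (le_add_of_nonneg_right (by positivity)))
  refine ⟨δ, by positivity, fun B hB hd => ?_⟩
  -- The ball of radius `M` contains the points approximating `d(x, A)` and `d(x, B)` for
  -- `x ∈ Xᵢ`, and on it the truncation in `ρ` is inactive at scale `δ`.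
  have hc : ∀ y : X, dist y x₀ < M → δ ≤ 1 / (1 + dist y x₀) := fun y hy =>
    hδM.trans (one_div_le_one_div_of_le (by positivity) (by linarith))
  have hAB : ∀ a ∈ A, dist a x₀ < M → infDist a B ≤ δ := fun a ha haM =>
    (infDist_lt_of_mem_of_hausRho_lt x₀ hB ha hd (hc a haM)).le
  have hBA : ∀ b ∈ B, dist b x₀ < M → infDist b A ≤ δ := fun b hb hbM =>
    (infDist_lt_of_mem_of_hausRho_lt x₀ ⟨a₀, ha₀⟩ hb (hausRho_comm x₀ _ _ ▸ hd)
      (hc b hbM)).le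
  refine (dAW_le_max_of_forall_dist_le x₀ (t := δ) fun x hx => ?_).trans_lt
    (max_lt (by linarith) hi)
  have hxa₀ : dist x a₀ ≤ i + dist a₀ x₀ := by linarith [dist_triangle_right x a₀ x₀]
  have hxA : infDist x A ≤ i + dist a₀ x₀ := (infDist_le_dist_of_mem ha₀).trans hxa₀
  have hxB : infDist x B ≤ δ + (i + dist a₀ x₀) :=
    infDist_le_infDist_add_dist.trans (add_le_add (hAB a₀ ha₀ (by linarith)) hxa₀)
  have hAx := infDist_le_infDist_add_of_forall_mem x₀ hB (by linarith) hBA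
  have hBx := infDist_le_infDist_add_of_forall_mem x₀ ⟨a₀, ha₀⟩ (by linarith) hAB
  exact abs_sub_le_iff.2 ⟨by linarith, by linarith⟩

end Estimates

section Homeomorph

variable {X : Type*} [MetricSpace X] (x₀ : X)

noncomputable def cldAWEquiv :
    CldAW X x₀ ≃ {F : CldHAlpha X x₀ | none ∈ F.1 ∧ F.1 ≠ {none}} where
  toFun A := ⟨⟨insertInfty A.1, ⟨none, none_mem_insertInfty _⟩,
      isClosed_insertInfty x₀ A.2.1 A.2.2⟩,
    none_mem_insertInfty _, insertInfty_ne_singleton A.2.1⟩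
  invFun F := ⟨some ⁻¹' F.1.1, preimage_some_nonempty F.2.1 F.2.2,
    isClosed_preimage_some x₀ F.1.2.2⟩
  left_inv A := Subtype.ext (preimage_some_insertInfty A.1)
  right_inv F := Subtype.ext (Subtype.ext (insertInfty_preimage_some F.2.1))

lemma continuous_cldAWEquiv : Continuous (cldAWEquiv x₀) := by
  refine Continuous.subtype_mk ?_ _
  refine continuous_distTop_of_forall_exists_dist_lt (fun A => dAW_self x₀ A.1)
    (fun F G H => hausRho_triangle x₀ F.1 G.1 H.1) fun A ε hε => ?_
  obtain ⟨δ, hδ, h⟩ := exists_forall_dAW_lt_hausRho_lt x₀ hε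
  exact ⟨δ, hδ, fun B => h A.1 B.1 A.2.1 B.2.1⟩

lemma continuous_cldAWEquiv_symm : Continuous (cldAWEquiv x₀).symm := by
  change Continuous[TopologicalSpace.induced Subtype.val
    (distTop fun F G : CldHAlpha X x₀ => hausRho (rho x₀) F.1 G.1), _] _
  rw [induced_distTop (fun F => hausRho_self x₀ F.1)
    fun F G H => hausRho_triangle x₀ F.1 G.1 H.1]
  refine continuous_distTop_of_forall_exists_dist_lt ?_ ?_ fun F ε hε => ?_
  · exact fun F => hausRho_self x₀ _
  · exact fun A B C => dAW_triangle x₀ A.2.1 B.2.1 C.2.1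
  obtain ⟨δ, hδ, h⟩ :=
    exists_forall_hausRho_lt_dAW_lt x₀ (preimage_some_nonempty F.2.1 F.2.2) hε
  rw [insertInfty_preimage_some F.2.1] at h
  exact ⟨δ, hδ, fun G hG => h (some ⁻¹' G.1.1) (preimage_some_nonempty G.2.1 G.2.2)
    (by rwa [insertInfty_preimage_some G.2.1])⟩

end Homeomorph

/-- the image of the embedding `e : Cld_AW(X) → Cld_H(αX)`,
`e(A) = A ∪ {∞}`, is exactly `Cld_H(αX | {∞}) \ {{∞}}`; consequently
`Cld_AW(X)` is homeomorphic to `Cld_H(αX | {∞}) \ {{∞}}`. -/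
theorem range_embedding_union_infty {X : Type*} [MetricSpace X] (x₀ : X) :
    ∃ h : ∀ A : CldAW X x₀,
      (insert (none : Option X) (some '' A.1)).Nonempty ∧
        @IsClosed _ (distTop (rho x₀)) (insert (none : Option X) (some '' A.1)),
      Set.range (fun A : CldAW X x₀ =>
          (⟨insert (none : Option X) (some '' A.1), h A⟩ : CldHAlpha X x₀)) =
        {F : CldHAlpha X x₀ | (none : Option X) ∈ F.1 ∧ F.1 ≠ {(none : Option X)}} ∧
      Nonempty (CldAW X x₀ ≃ₜ
        {F : CldHAlpha X x₀ | (none : Option X) ∈ F.1 ∧ F.1 ≠ {(none : Option X)}}) := by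
  refine ⟨fun A => ((cldAWEquiv x₀ A).1).2, ?_,
    ⟨⟨cldAWEquiv x₀, continuous_cldAWEquiv x₀, continuous_cldAWEquiv_symm x₀⟩⟩⟩
  have h := congrArg (Subtype.val '' ·) (cldAWEquiv x₀).surjective.range_eq
  rwa [image_univ, Subtype.range_coe, ← range_comp] at h
end

section
/- For a metric space (X,d) with basepoint x₀, the function ρ on αX = X ∪ {∞} defined by ρ(x,y) = min{d(x,y), 1/(1+d(x,x₀)) + 1/(1+d(y,x₀))} for x,y ∈ X, ρ(x,∞) = ρ(∞,x) = 1/(1+d(x,x₀)) for x ∈ X, and ρ(∞,∞) = 0, is a metric on αX; the diameter of (αX, ρ) is less than 2, and the subspace (X, ρ|X×X) is homeomorphic to (X,d) via the identity. -/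
open Metric Set Topology Filter

/-!
Write `f x = 1 / (1 + d(x, x₀))`. Then `ρ` is `min (d x y) (f x + f y)` on `X`, extended by
`ρ(x, ∞) = f x`, and this is a metric for any positive `1`-Lipschitz weight `f`: view `∞` as a
point at infinite `d`-distance with weight `0`. In the triangle inequality through a middle
point `y`, either both legs are measured by `d`, or one leg pays `f y`, and the Lipschitz bound
`f x ≤ f y + d x y` trades a mixed pair of legs for weights. Truncation leaves `ρ(x, y) = d x y`
whenever `ρ(x, y) < f x`, so small balls, hence the topology of `X`, are unchanged. The diameter
is below `2` because `f ≤ 1` with equality only at `x₀`.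
-/

section CapDist

variable {X : Type*} [MetricSpace X] (f : X → ℝ)

noncomputable def capDist : Option X → Option X → ℝ
  | some x, some y => min (dist x y) (f x + f y)
  | some x, none => f x
  | none, some y => f y
  | none, none => 0

variable {f}

lemma capDist_nonneg (hf_nonneg : ∀ x, 0 ≤ f x) (p q : Option X) : 0 ≤ capDist f p q := by
  rcases p with _ | x <;> rcases q with _ | y
  · exact le_rfl
  · exact hf_nonneg y
  · exact hf_nonneg x
  · exact le_min dist_nonneg (add_nonneg (hf_nonneg x) (hf_nonneg y))

lemma capDist_eq_zero_iff (hf_pos : ∀ x, 0 < f x) {p q : Option X} :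
    capDist f p q = 0 ↔ p = q := by
  rcases p with _ | x <;> rcases q with _ | y
  · simp [capDist]
  · simpa [capDist] using (hf_pos y).ne'
  · simpa [capDist] using (hf_pos x).ne'
  · have hxy := add_pos (hf_pos x) (hf_pos y)
    simp only [capDist, Option.some.injEq, ← dist_eq_zero (x := x)]
    constructor
    · intro h
      rcases min_choice (dist x y) (f x + f y) with h' | h' <;> rw [h'] at h
      · exact h
      · linarith
    · intro h
      rw [h, min_eq_left hxy.le]

lemma capDist_comm (p q : Option X) : capDist f p q = capDist f q p := by
  rcases p with _ | x <;> rcases q with _ | y <;> simp [capDist, dist_comm, add_comm]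

lemma capDist_triangle (hf : LipschitzWith 1 f) (hf_nonneg : ∀ x, 0 ≤ f x) (p q r : Option X) :
    capDist f p r ≤ capDist f p q + capDist f q r := by
  have hlip (x y : X) : f x ≤ f y + dist x y := by simpa using hf.le_add_mul x y
  rcases p with _ | x <;> rcases q with _ | y <;> rcases r with _ | z <;>
    simp only [capDist, ← min_add_add_left, ← min_add_add_right, le_min_iff, add_zero, zero_add]
  · exact le_rfl
  · exact le_rfl
  · linarith [hf_nonneg y]
  · exact ⟨by linarith [hlip z y, dist_comm z y], by linarith [hf_nonneg y]⟩
  · exact le_rfl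
  · exact min_le_right _ _
  · exact ⟨by linarith [hlip x y], by linarith [hf_nonneg y]⟩
  · refine ⟨⟨(min_le_left _ _).trans (dist_triangle x y z), ?_⟩, ?_, ?_⟩ <;>
      refine (min_le_right _ _).trans ?_ <;>
      linarith [hlip x y, hlip z y, dist_comm z y, hf_nonneg y]

lemma capDist_some_lt_iff (hf_nonneg : ∀ x, 0 ≤ f x) {x y : X} {ε : ℝ} (hε : ε ≤ f x) :
    capDist f (some x) (some y) < ε ↔ dist x y < ε := by
  simp only [capDist, min_lt_iff, or_iff_left_iff_imp]
  intro h
  linarith [hf_nonneg y]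

lemma continuous_capDist_some (hf : Continuous f) (p : Option X) :
    Continuous fun y => capDist f p (some y) := by
  rcases p with _ | x
  · exact hf
  · exact (continuous_const.dist continuous_id).min (continuous_const.add hf)

theorem induced_some_distTop_capDist (hf : Continuous f) (hf_pos : ∀ x, 0 < f x) :
    TopologicalSpace.induced some (distTop (capDist f)) = (inferInstance : TopologicalSpace X) := by
  rw [distTop, induced_generateFrom_eq]
  refine le_antisymm ?_ (le_generateFrom ?_)
  · rw [TopologicalSpace.le_def]
    intro U hU
    refine (@isOpen_iff_forall_mem_open _ (_) _).2 fun x hx => ?_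
    obtain ⟨r, hr, hball⟩ := Metric.isOpen_iff.1 hU x hx
    have hε : 0 < min r (f x) := lt_min hr (hf_pos x)
    refine ⟨ball x (min r (f x)), (ball_subset_ball (min_le_left _ _)).trans hball, ?_,
      mem_ball_self hε⟩
    refine TopologicalSpace.isOpen_generateFrom_of_mem ⟨_, ⟨some x, _, hε, rfl⟩, ?_⟩
    ext y
    exact (capDist_some_lt_iff (fun y => (hf_pos y).le) (min_le_right _ _)).trans mem_ball'.symm
  · rintro _ ⟨_, ⟨p, ε, -, rfl⟩, rfl⟩
    exact isOpen_lt (continuous_capDist_some hf p) continuous_const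

end CapDist

section Rho

variable {X : Type*} [MetricSpace X] (x₀ : X)

noncomputable def basepointWeight (x : X) : ℝ := 1 / (1 + dist x x₀)

lemma rho_eq_capDist : rho x₀ = capDist (basepointWeight x₀) := by
  funext p q
  rcases p <;> rcases q <;> rfl

lemma basepointWeight_pos (x : X) : 0 < basepointWeight x₀ x := by
  unfold basepointWeight
  positivity

lemma basepointWeight_le_one (x : X) : basepointWeight x₀ x ≤ 1 := by
  rw [basepointWeight, div_le_one (by positivity)]
  linarith [dist_nonneg (x := x) (y := x₀)]

lemma basepointWeight_lt_one {x : X} (hx : x ≠ x₀) : basepointWeight x₀ x < 1 := by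
  rw [basepointWeight, div_lt_one (by positivity)]
  linarith [dist_pos.2 hx]

lemma lipschitzWith_basepointWeight : LipschitzWith 1 (basepointWeight x₀) := by
  refine LipschitzWith.of_le_add fun x y => ?_
  have ha := dist_nonneg (x := x) (y := x₀)
  have hb := dist_nonneg (x := y) (y := x₀)
  have hc := dist_nonneg (x := x) (y := y)
  have htri : dist y x₀ ≤ dist x y + dist x x₀ := dist_triangle_left _ _ _
  rw [basepointWeight, basepointWeight, div_add' _ _ _ (by positivity),
    div_le_div_iff₀ (by positivity) (by positivity)]
  nlinarith [mul_nonneg hc (add_nonneg (add_nonneg ha hb) (mul_nonneg ha hb))]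

lemma rho_lt_two (p q : Option X) : rho x₀ p q < 2 := by
  have h₁ := basepointWeight_le_one x₀
  rw [rho_eq_capDist]
  rcases p with _ | x <;> rcases q with _ | y
  · norm_num [capDist]
  · exact (h₁ y).trans_lt one_lt_two
  · exact (h₁ x).trans_lt one_lt_two
  · rcases eq_or_ne x y with rfl | hxy
    · simp [capDist, (basepointWeight_pos x₀ x).le]
    · refine (min_le_right _ _).trans_lt ?_
      have : x ≠ x₀ ∨ y ≠ x₀ := by
        by_contra! h
        exact hxy (h.1.trans h.2.symm)
      rcases this with hx | hy
      · linarith [h₁ y, basepointWeight_lt_one x₀ hx]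
      · linarith [h₁ x, basepointWeight_lt_one x₀ hy]

end Rho

/-- `ρ` is a metric on `αX = X ∪ {∞}`, the diameter of `(αX, ρ)`
is less than `2`, and the subspace `(X, ρ|X×X)` is homeomorphic to `(X,d)` via
the identity (i.e. the topology induced on `X` by `ρ` is the metric topology). -/
theorem rho_is_metric_diam_lt_two {X : Type*} [MetricSpace X] (x₀ : X) :
    (∀ p q : Option X, 0 ≤ rho x₀ p q) ∧
    (∀ p q : Option X, rho x₀ p q = 0 ↔ p = q) ∧
    (∀ p q : Option X, rho x₀ p q = rho x₀ q p) ∧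
    (∀ p q r : Option X, rho x₀ p r ≤ rho x₀ p q + rho x₀ q r) ∧
    (∀ p q : Option X, rho x₀ p q < 2) ∧
    TopologicalSpace.induced (some : X → Option X) (distTop (rho x₀)) =
      (inferInstance : TopologicalSpace X) := by
  have hpos := basepointWeight_pos x₀
  have hlip := lipschitzWith_basepointWeight x₀
  refine ⟨?_, ?_, ?_, ?_, rho_lt_two x₀, ?_⟩ <;> rw [rho_eq_capDist]
  · exact capDist_nonneg fun x => (hpos x).le
  · exact fun p q => capDist_eq_zero_iff hpos
  · exact capDist_comm
  · exact capDist_triangle hlip fun x => (hpos x).le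
  · exact induced_some_distTop_capDist hlip.continuous hpos
end
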